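/- arXiv:2305.03945 — 5 statements merged into one kernel-verified Lean document; each statement's English description precedes it below -/
import Mathlib

section
/- Let A be an invertible symmetric real N×N matrix with eigenvalues λ_1,…,λ_N, and τ_u, τ_p > 0. The 2N×2N iteration matrix M = [[I - 2τ_uτ_p AᵀA, -τ_u Aᵀ], [τ_p A, I]] has spectral radius equal to max over k of f(τ_uτ_p λ_k²), where f(t) = √(1-t) for 0 < t ≤ 1 and f(t) = t - 1 + √(t²-t) for t ≥ 1. -/
open Matrix

/-- The PDHG convergence factor. -/
noncomputable def pdhgRate (t : ℝ) : ℝ :=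
  if t ≤ 1 then Real.sqrt (1 - t) else t - 1 + Real.sqrt (t ^ 2 - t)

/-!
Conjugating by the orthogonal matrix `diag(Q, Q)` turns the iteration matrix into a block matrix
with diagonal blocks, i.e. into a direct sum of the `2 × 2` matrices `D_k`. With
`t = τ_u τ_p λ_k²` the characteristic polynomial of `D_k` is `(z - (1 - t))² - (t² - t)`. For
`t ≤ 1` its roots are complex conjugate with modulus `√(1 - t)`; for `t ≥ 1` they are the real
numbers `1 - t ± √(t² - t)`, the larger in modulus being `t - 1 + √(t² - t)`.
-/

open Complex in
lemma sq_sub_eq_iff_of_le_one {t : ℝ} (ht0 : 0 ≤ t) (ht1 : t ≤ 1) {z : ℂ} :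
    (z - (1 - t : ℝ)) ^ 2 = (t ^ 2 - t : ℝ) ↔
      z = (1 - t : ℝ) + √(t - t ^ 2) * I ∨ z = (1 - t : ℝ) + (-√(t - t ^ 2) : ℝ) * I := by
  have hs : ((t ^ 2 - t : ℝ) : ℂ) = (√(t - t ^ 2) * I) ^ 2 := by
    rw [mul_pow, I_sq, ← ofReal_pow, Real.sq_sqrt (by nlinarith)]
    push_cast; ring
  rw [hs, sq_eq_sq_iff_eq_or_eq_neg, sub_eq_iff_eq_add', sub_eq_iff_eq_add']
  push_cast; ring_nf

open Complex in
lemma sq_sub_eq_iff_of_one_le {t : ℝ} (ht1 : 1 ≤ t) {z : ℂ} :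
    (z - (1 - t : ℝ)) ^ 2 = (t ^ 2 - t : ℝ) ↔
      z = (1 - t + √(t ^ 2 - t) : ℝ) ∨ z = (1 - t - √(t ^ 2 - t) : ℝ) := by
  have hs : ((t ^ 2 - t : ℝ) : ℂ) = (√(t ^ 2 - t) : ℂ) ^ 2 := by
    rw [← ofReal_pow, Real.sq_sqrt (by nlinarith)]
  rw [hs, sq_eq_sq_iff_eq_or_eq_neg, sub_eq_iff_eq_add', sub_eq_iff_eq_add']
  push_cast; ring_nf

lemma norm_eq_sqrt_of_sq_sub_eq {t : ℝ} (ht0 : 0 ≤ t) (ht1 : t ≤ 1) {z : ℂ}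
    (hz : (z - (1 - t : ℝ)) ^ 2 = (t ^ 2 - t : ℝ)) : ‖z‖ = √(1 - t) := by
  rcases (sq_sub_eq_iff_of_le_one ht0 ht1).1 hz with rfl | rfl <;>
  · simp only [Complex.norm_add_mul_I, neg_sq, Real.sq_sqrt (by nlinarith : 0 ≤ t - t ^ 2)]
    ring_nf

lemma norm_le_pdhgRate {t : ℝ} (ht : 0 ≤ t) {z : ℂ}
    (hz : (z - (1 - t : ℝ)) ^ 2 = (t ^ 2 - t : ℝ)) : ‖z‖ ≤ pdhgRate t := by
  unfold pdhgRate
  split_ifs with ht1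
  · exact (norm_eq_sqrt_of_sq_sub_eq ht ht1 hz).le
  · have hs := Real.sqrt_nonneg (t ^ 2 - t)
    rcases (sq_sub_eq_iff_of_one_le (le_of_not_ge ht1)).1 hz with rfl | rfl <;>
      rw [Complex.norm_real, Real.norm_eq_abs, abs_le] <;> constructor <;> linarith

lemma exists_sq_sub_eq_and_norm_eq_pdhgRate {t : ℝ} (ht : 0 ≤ t) :
    ∃ z : ℂ, (z - (1 - t : ℝ)) ^ 2 = (t ^ 2 - t : ℝ) ∧ ‖z‖ = pdhgRate t := by
  unfold pdhgRate
  split_ifs with ht1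
  · have hz := (sq_sub_eq_iff_of_le_one ht ht1).2 (Or.inl rfl)
    exact ⟨_, hz, norm_eq_sqrt_of_sq_sub_eq ht ht1 hz⟩
  · have hs := Real.sqrt_nonneg (t ^ 2 - t)
    refine ⟨_, (sq_sub_eq_iff_of_one_le (le_of_not_ge ht1)).2 (Or.inr rfl), ?_⟩
    rw [Complex.norm_real, Real.norm_eq_abs, abs_of_nonpos (by linarith)]
    ring

namespace Matrix

variable {n R : Type*} [Fintype n] [DecidableEq n]

theorem det_fromBlocks_diagonal [CommRing R] (a b c d : n → R) :
    (fromBlocks (diagonal a) (diagonal b) (diagonal c) (diagonal d)).det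
      = ∏ k, (a k * d k - b k * c k) := by
  let e : Fin 2 × n ≃ n ⊕ n :=
    (finTwoEquiv.prodCongr (Equiv.refl n)).trans (Equiv.boolProdEquivSum n)
  have he : ∀ i, e.symm (.inl i) = (0, i) ∧ e.symm (.inr i) = (1, i) := fun i => ⟨rfl, rfl⟩
  have h : fromBlocks (diagonal a) (diagonal b) (diagonal c) (diagonal d)
      = (blockDiagonal fun k => !![a k, b k; c k, d k]).submatrix e.symm e.symm := by
    ext (i | i) (j | j) <;> simp [he, blockDiagonal_apply, diagonal_apply]
  simp [h, det_submatrix_equiv_self, det_blockDiagonal, det_fin_two]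

theorem mem_spectrum_fromBlocks_diagonal {K : Type*} [Field K] (a b c d : n → K) (z : K) :
    z ∈ spectrum K (fromBlocks (diagonal a) (diagonal b) (diagonal c) (diagonal d)) ↔
      ∃ k, (z - a k) * (z - d k) = b k * c k := by
  have h : scalar (n ⊕ n) z - fromBlocks (diagonal a) (diagonal b) (diagonal c) (diagonal d) =
      fromBlocks (diagonal fun k => z - a k) (diagonal (-b)) (diagonal (-c))
        (diagonal fun k => z - d k) := by
    ext (i | i) (j | j) <;> by_cases hij : i = j <;> simp [hij]
  rw [mem_spectrum_iff_isRoot_charpoly, Polynomial.IsRoot, eval_charpoly, h,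
    det_fromBlocks_diagonal, Finset.prod_eq_zero_iff]
  simp [sub_eq_zero]

theorem spectrum_mul_mul_transpose {S : Type*} [CommSemiring S] [CommRing R] [Algebra S R]
    {B : Matrix n n R} (hB : B * Bᵀ = 1) (M : Matrix n n R) :
    spectrum S (B * M * Bᵀ) = spectrum S M :=
  spectrum.units_conjugate (u := ⟨B, Bᵀ, hB, mul_eq_one_comm.mp hB⟩)

theorem fromBlocks_conj [CommRing R] (Q : Matrix n n R) (X Y Z W : Matrix n n R) :
    fromBlocks Q 0 0 Q * fromBlocks X Y Z W * (fromBlocks Q 0 0 Q)ᵀ =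
      fromBlocks (Q * X * Qᵀ) (Q * Y * Qᵀ) (Q * Z * Qᵀ) (Q * W * Qᵀ) := by
  simp [fromBlocks_multiply, fromBlocks_transpose]

end Matrix

section PDHG

variable {n R : Type*} [Fintype n] [DecidableEq n] [CommRing R]

def pdhgMatrix (σ τ : R) (A : Matrix n n R) : Matrix (n ⊕ n) (n ⊕ n) R :=
  fromBlocks (1 - (2 * σ * τ) • (Aᵀ * A)) ((-σ) • Aᵀ) (τ • A) 1

theorem pdhgMatrix_map {S : Type*} [CommRing S] (f : R →+* S) (σ τ : R) (A : Matrix n n R) :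
    (pdhgMatrix σ τ A).map f = pdhgMatrix (f σ) (f τ) (A.map f) := by
  ext (i | i) (j | j) <;> simp [pdhgMatrix, Matrix.mul_apply, one_apply, apply_ite f, map_ofNat]

theorem pdhgMatrix_conj {Q : Matrix n n R} (hQ : Q * Qᵀ = 1) (σ τ : R) (A : Matrix n n R) :
    pdhgMatrix σ τ (Q * A * Qᵀ) =
      fromBlocks Q 0 0 Q * pdhgMatrix σ τ A * (fromBlocks Q 0 0 Q)ᵀ := by
  have hQ' (X : Matrix n n R) : Qᵀ * (Q * X) = X := by
    rw [← Matrix.mul_assoc, mul_eq_one_comm.mp hQ, Matrix.one_mul]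
  rw [pdhgMatrix, pdhgMatrix, fromBlocks_conj]
  congr 1 <;> simp [Matrix.mul_sub, Matrix.sub_mul, transpose_mul, Matrix.mul_assoc, hQ, hQ']

theorem pdhgMatrix_diagonal (σ τ : R) (lam : n → R) :
    pdhgMatrix σ τ (diagonal lam) =
      fromBlocks (diagonal fun k => 1 - 2 * σ * τ * lam k ^ 2) (diagonal fun k => -σ * lam k)
        (diagonal fun k => τ * lam k) (diagonal fun _ => 1) := by
  ext (i | i) (j | j) <;> by_cases hij : i = j <;> simp [pdhgMatrix, hij, one_apply, sq]

theorem mem_spectrum_pdhgMatrix_iff {K : Type*} [Field K] {A Q : Matrix n n K} {lam : n → K}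
    (hQ : Q * Qᵀ = 1) (hA : A = Q * diagonal lam * Qᵀ) (σ τ z : K) :
    z ∈ spectrum K (pdhgMatrix σ τ A) ↔
      ∃ k, (z - (1 - σ * τ * lam k ^ 2)) ^ 2 = (σ * τ * lam k ^ 2) ^ 2 - σ * τ * lam k ^ 2 := by
  have hB : fromBlocks Q 0 0 Q * (fromBlocks Q 0 0 Q)ᵀ = 1 := by
    simp [fromBlocks_multiply, fromBlocks_transpose, hQ]
  rw [hA, pdhgMatrix_conj hQ, spectrum_mul_mul_transpose hB, pdhgMatrix_diagonal,
    mem_spectrum_fromBlocks_diagonal]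
  refine exists_congr fun k => ⟨fun h => ?_, fun h => ?_⟩ <;> linear_combination h

end PDHG

theorem stmt_4_general {N : ℕ} (hN : 0 < N) (A : Matrix (Fin N) (Fin N) ℝ)
    (lam : Fin N → ℝ) (Q : Matrix (Fin N) (Fin N) ℝ)
    (hQ : Q * Qᵀ = 1) (hdecomp : A = Q * Matrix.diagonal lam * Qᵀ)
    (τu τp : ℝ) (hu : 0 < τu) (hp : 0 < τp) :
    IsGreatest
      ((fun z : ℂ => ‖z‖) ''
        spectrum ℂ
          ((Matrix.fromBlocks (1 - (2 * τu * τp) • (Aᵀ * A)) ((-τu) • Aᵀ)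
              (τp • A) 1).map Complex.ofReal))
      (Finset.univ.sup' (Finset.univ_nonempty_iff.mpr ⟨⟨0, hN⟩⟩)
        fun k : Fin N => pdhgRate (τu * τp * lam k ^ 2)) := by
  set t : Fin N → ℝ := fun k => τu * τp * lam k ^ 2
  have ht (k : Fin N) : 0 ≤ t k := by positivity
  have hspec (z : ℂ) : z ∈ spectrum ℂ ((pdhgMatrix τu τp A).map Complex.ofRealHom) ↔
      ∃ k, (z - (1 - t k : ℝ)) ^ 2 = (t k ^ 2 - t k : ℝ) := by
    have hQc : Q.map Complex.ofRealHom * (Q.map Complex.ofRealHom)ᵀ = 1 := by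
      rw [← transpose_map, ← Matrix.map_mul, hQ, Matrix.map_one _ (map_zero _) (map_one _)]
    have hAc : A.map Complex.ofRealHom =
        Q.map Complex.ofRealHom * diagonal (fun k => (lam k : ℂ)) *
          (Q.map Complex.ofRealHom)ᵀ := by
      rw [hdecomp, ← transpose_map, Matrix.map_mul, Matrix.map_mul, diagonal_map (map_zero _)]
      rfl
    rw [pdhgMatrix_map, mem_spectrum_pdhgMatrix_iff hQc hAc]
    simp [t]
  refine ⟨?_, ?_⟩
  · obtain ⟨k, -, hk⟩ := Finset.exists_mem_eq_sup' (Finset.univ_nonempty_iff.mpr ⟨⟨0, hN⟩⟩)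
      fun k => pdhgRate (t k)
    obtain ⟨z, hz, hnorm⟩ := exists_sq_sub_eq_and_norm_eq_pdhgRate (ht k)
    exact ⟨z, (hspec z).2 ⟨k, hz⟩, hnorm.trans hk.symm⟩
  · rintro _ ⟨z, hz, rfl⟩
    obtain ⟨k, hk⟩ := (hspec z).1 hz
    exact (norm_le_pdhgRate (ht k) hk).trans
      (Finset.le_sup' (fun k => pdhgRate (t k)) (Finset.mem_univ k))

/-- For invertible symmetric `A` with eigenvalues `λ_k` (orthogonal eigendecomposition
`A = Q Λ Qᵀ`), the spectral radius of the PDHG iteration matrix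
`M = [[I - 2τ_uτ_p AᵀA, -τ_u Aᵀ], [τ_p A, I]]` equals `max_k f(τ_uτ_p λ_k²)`. -/
theorem stmt_4 {N : ℕ} (hN : 0 < N) (A : Matrix (Fin N) (Fin N) ℝ) (hA : A.IsSymm)
    (hdet : IsUnit A.det) (lam : Fin N → ℝ) (Q : Matrix (Fin N) (Fin N) ℝ)
    (hQ : Q * Qᵀ = 1) (hdecomp : A = Q * Matrix.diagonal lam * Qᵀ)
    (τu τp : ℝ) (hu : 0 < τu) (hp : 0 < τp) :
    IsGreatest
      ((fun z : ℂ => ‖z‖) ''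
        spectrum ℂ
          ((Matrix.fromBlocks (1 - (2 * τu * τp) • (Aᵀ * A)) ((-τu) • Aᵀ)
              (τp • A) 1).map Complex.ofReal))
      (Finset.univ.sup' (Finset.univ_nonempty_iff.mpr ⟨⟨0, hN⟩⟩)
        fun k : Fin N => pdhgRate (τu * τp * lam k ^ 2)) :=
  stmt_4_general hN A lam Q hQ hdecomp τu τp hu hp
end

section
/- For every κ > 1, the equation √(1 - η/κ²) = η - 1 + √(η² - η) has a unique solution η* in the interval [1, 4/3), and η* is given in closed form by η* = 2κ² / ( (3/4)κ² + 3/2 - 1/(4κ²) + ((κ-1)/(2κ))·√((κ-1)(3κ+1))·√((3/4)κ² + 3/2 + 2κ - 1/(4κ²)) ). -/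
/-!
Squaring the equation twice turns it into the quadratic `η² - P η + κ² = 0` with
`P = 3κ²/4 + 3/2 - 1/(4κ²)`. Since `P - 2κ = (κ - 1)³(3κ + 1)/(4κ²)`, the radical in the closed
form is `Q = √(P² - 4κ²)`, and the closed form `2κ²/(P + Q) = (P - Q)/2` is the smaller root.
The conditions lost in squaring, `1 ≤ η` and `2η ≤ 3 - 1/κ²`, as well as `η < 4/3`, are read off
the sign of the quadratic at `1`, `(3 - 1/κ²)/2` and `4/3`. Uniqueness holds because the left side
is nonincreasing in `η` while the right side is strictly increasing on `[1, ∞)`.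
-/

open Real Set

lemma strictMonoOn_sub_one_add_sqrt_sq_sub :
    StrictMonoOn (fun η : ℝ => η - 1 + √(η ^ 2 - η)) (Ici 1) := by
  intro x hx y _ hxy
  have : √(x ^ 2 - x) ≤ √(y ^ 2 - y) := sqrt_le_sqrt (by nlinarith [mem_Ici.mp hx])
  dsimp only
  linarith

lemma antitone_sqrt_one_sub_div (κ : ℝ) : Antitone (fun η : ℝ => √(1 - η / κ ^ 2)) := by
  intro x y hxy
  have : x / κ ^ 2 ≤ y / κ ^ 2 := div_le_div_of_nonneg_right hxy (sq_nonneg κ)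
  exact sqrt_le_sqrt (by linarith)

lemma eq_of_sqrt_one_sub_div_eq {κ x y : ℝ} (hx : 1 ≤ x) (hy : 1 ≤ y)
    (hxe : √(1 - x / κ ^ 2) = x - 1 + √(x ^ 2 - x))
    (hye : √(1 - y / κ ^ 2) = y - 1 + √(y ^ 2 - y)) : x = y := by
  have not_lt : ∀ {a b : ℝ}, 1 ≤ a → 1 ≤ b → a < b →
      √(1 - a / κ ^ 2) = a - 1 + √(a ^ 2 - a) → √(1 - b / κ ^ 2) = b - 1 + √(b ^ 2 - b) →
      False := by
    intro a b ha hb hab hae hbe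
    have hmono := strictMonoOn_sub_one_add_sqrt_sq_sub ha hb hab
    have hanti := antitone_sqrt_one_sub_div κ hab.le
    simp only at hmono hanti
    linarith
  rcases lt_trichotomy x y with h | h | h
  · exact (not_lt hx hy h hxe hye).elim
  · exact h
  · exact (not_lt hy hx h hye hxe).elim

lemma lt_of_mul_sub_pos_of_lt {a b x : ℝ} (hxb : x < b) (h : 0 < (x - a) * (x - b)) : x < a := by
  by_contra! hax
  nlinarith

lemma le_of_mul_sub_nonpos {a b x : ℝ} (hab : a ≤ b) (h : (x - a) * (x - b) ≤ 0) : a ≤ x := by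
  by_contra! hxa
  nlinarith

lemma lt_of_mul_sub_neg {a b x : ℝ} (hab : a ≤ b) (h : (x - a) * (x - b) < 0) : a < x := by
  by_contra! hxa
  nlinarith

noncomputable def rootSum (κ : ℝ) : ℝ := 3 / 4 * κ ^ 2 + 3 / 2 - 1 / (4 * κ ^ 2)

noncomputable def rootGap (κ : ℝ) : ℝ :=
  (κ - 1) / (2 * κ) * √((κ - 1) * (3 * κ + 1)) *
    √(3 / 4 * κ ^ 2 + 3 / 2 + 2 * κ - 1 / (4 * κ ^ 2))

noncomputable def smallerRoot (κ : ℝ) : ℝ := (rootSum κ - rootGap κ) / 2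

noncomputable def largerRoot (κ : ℝ) : ℝ := (rootSum κ + rootGap κ) / 2

lemma rootSum_mul {κ : ℝ} (hκ : κ ≠ 0) : 4 * κ ^ 2 * rootSum κ = 3 * κ ^ 4 + 6 * κ ^ 2 - 1 := by
  unfold rootSum
  field_simp
  ring

lemma sqrt_one_sub_div_eq_of_quadratic {κ η : ℝ} (hκ : κ ≠ 0) (h₁ : 1 ≤ η)
    (h₂ : 2 * η ≤ 3 - 1 / κ ^ 2) (hq : η ^ 2 - rootSum κ * η + κ ^ 2 = 0) :
    √(1 - η / κ ^ 2) = η - 1 + √(η ^ 2 - η) := by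
  set s := √(η ^ 2 - η)
  have hs : s ^ 2 = η ^ 2 - η := sq_sqrt (by nlinarith)
  have hcross : 2 * (η - 1) * s = η * (3 - 2 * η - 1 / κ ^ 2) := by
    refine (sq_eq_sq₀ ?_ ?_).mp ?_
    · have : 0 ≤ s := sqrt_nonneg _
      have : 0 ≤ η - 1 := by linarith
      positivity
    · exact mul_nonneg (by linarith) (by linarith)
    · field_simp
      linear_combination (4 * κ ^ 4 * (η - 1) ^ 2) * hs - 4 * κ ^ 2 * η * hq -
        η ^ 2 * rootSum_mul hκ
  have hsq : 1 - η / κ ^ 2 = (η - 1 + s) ^ 2 := by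
    linear_combination (-1 : ℝ) * hs - hcross
  rw [hsq, sqrt_sq (by positivity [sqrt_nonneg (η ^ 2 - η)])]

section Roots

variable {κ : ℝ}

lemma two_lt_rootSum (hκ : 1 < κ) : 2 < rootSum κ := by
  have h := rootSum_mul (show κ ≠ 0 by positivity)
  nlinarith [mul_pos (show 0 < 3 * κ ^ 2 + 1 by positivity) (show 0 < κ ^ 2 - 1 by nlinarith)]

lemma rootGap_nonneg (hκ : 1 ≤ κ) : 0 ≤ rootGap κ := by
  unfold rootGap
  have : 0 ≤ (κ - 1) / (2 * κ) := div_nonneg (by linarith) (by linarith)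
  positivity

lemma rootGap_sq (hκ : 1 ≤ κ) : rootGap κ ^ 2 = rootSum κ ^ 2 - 4 * κ ^ 2 := by
  have hκ0 : κ ≠ 0 := by positivity
  have h₁ : 0 ≤ (κ - 1) * (3 * κ + 1) := by nlinarith
  have h₂ : 0 ≤ 3 / 4 * κ ^ 2 + 3 / 2 + 2 * κ - 1 / (4 * κ ^ 2) := by
    have : 1 / (4 * κ ^ 2) ≤ 1 / 4 := by
      gcongr
      nlinarith
    nlinarith
  unfold rootGap rootSum
  rw [mul_pow, mul_pow, sq_sqrt h₁, sq_sqrt h₂]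
  field_simp
  ring

lemma smallerRoot_le_largerRoot (hκ : 1 ≤ κ) : smallerRoot κ ≤ largerRoot κ := by
  unfold smallerRoot largerRoot
  linarith [rootGap_nonneg hκ]

lemma one_lt_largerRoot (hκ : 1 < κ) : 1 < largerRoot κ := by
  unfold largerRoot
  linarith [two_lt_rootSum hκ, rootGap_nonneg hκ.le]

lemma sq_sub_rootSum_mul_add_sq (hκ : 1 ≤ κ) (x : ℝ) :
    x ^ 2 - rootSum κ * x + κ ^ 2 = (x - smallerRoot κ) * (x - largerRoot κ) := by
  unfold smallerRoot largerRoot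
  linear_combination (1 / 4 : ℝ) * rootGap_sq hκ

lemma smallerRoot_isRoot (hκ : 1 ≤ κ) :
    smallerRoot κ ^ 2 - rootSum κ * smallerRoot κ + κ ^ 2 = 0 := by
  rw [sq_sub_rootSum_mul_add_sq hκ, sub_self, zero_mul]

lemma smallerRoot_eq_two_mul_sq_div (hκ : 1 < κ) :
    smallerRoot κ = 2 * κ ^ 2 / (rootSum κ + rootGap κ) := by
  have hpos : 0 < rootSum κ + rootGap κ := by
    linarith [two_lt_rootSum hκ, rootGap_nonneg hκ.le]
  rw [eq_div_iff hpos.ne', smallerRoot]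
  linear_combination (-1 / 2 : ℝ) * rootGap_sq hκ.le

lemma one_lt_smallerRoot (hκ : 1 < κ) : 1 < smallerRoot κ := by
  refine lt_of_mul_sub_pos_of_lt (one_lt_largerRoot hκ) ?_
  rw [← sq_sub_rootSum_mul_add_sq hκ.le]
  have hval : 4 * κ ^ 2 * (1 ^ 2 - rootSum κ * 1 + κ ^ 2) = (κ ^ 2 - 1) ^ 2 := by
    linear_combination -rootSum_mul (show κ ≠ 0 by positivity)
  have : 1 < κ ^ 2 := by nlinarith
  have : 0 < (κ ^ 2 - 1) ^ 2 := by positivity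
  exact pos_of_mul_pos_right (hval ▸ this) (by positivity)

lemma smallerRoot_lt_four_thirds (hκ : 1 < κ) : smallerRoot κ < 4 / 3 := by
  have hP := rootSum_mul (show κ ≠ 0 by positivity)
  rcases le_or_gt (κ ^ 2) (3 / 2) with hsmall | hlarge
  · have : rootSum κ < 8 / 3 := by nlinarith
    unfold smallerRoot
    linarith [rootGap_nonneg hκ.le]
  · refine lt_of_mul_sub_neg (smallerRoot_le_largerRoot hκ.le) ?_
    rw [← sq_sub_rootSum_mul_add_sq hκ.le]
    nlinarith

lemma two_mul_smallerRoot_le (hκ : 1 < κ) : 2 * smallerRoot κ ≤ 3 - 1 / κ ^ 2 := by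
  suffices smallerRoot κ ≤ (3 - 1 / κ ^ 2) / 2 by linarith
  refine le_of_mul_sub_nonpos (smallerRoot_le_largerRoot hκ.le) ?_
  rw [← sq_sub_rootSum_mul_add_sq hκ.le]
  have hval : ((3 - 1 / κ ^ 2) / 2) ^ 2 - rootSum κ * ((3 - 1 / κ ^ 2) / 2) + κ ^ 2 =
      -((κ ^ 2 - 1) ^ 3 / (8 * κ ^ 4)) := by
    have hκ0 : κ ≠ 0 := by positivity
    field_simp
    linear_combination (4 - 12 * κ ^ 2) * rootSum_mul hκ0
  have : 0 ≤ (κ ^ 2 - 1) ^ 3 := pow_nonneg (by nlinarith) 3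
  have : 0 ≤ (κ ^ 2 - 1) ^ 3 / (8 * κ ^ 4) := by positivity
  linarith

end Roots

/-- For `κ > 1`, the equation `√(1 - η/κ²) = η - 1 + √(η² - η)` has a unique
solution `η*` in `[1, 4/3)`, given in closed form. -/
theorem stmt_6 (κ : ℝ) (hκ : 1 < κ) :
    ∃ η : ℝ,
      η = 2 * κ ^ 2 /
        ((3 / 4 * κ ^ 2 + 3 / 2 - 1 / (4 * κ ^ 2)) +
          (κ - 1) / (2 * κ) * Real.sqrt ((κ - 1) * (3 * κ + 1)) *
            Real.sqrt (3 / 4 * κ ^ 2 + 3 / 2 + 2 * κ - 1 / (4 * κ ^ 2))) ∧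
      η ∈ Set.Ico (1 : ℝ) (4 / 3) ∧
      Real.sqrt (1 - η / κ ^ 2) = η - 1 + Real.sqrt (η ^ 2 - η) ∧
      ∀ η' ∈ Set.Ico (1 : ℝ) (4 / 3),
        Real.sqrt (1 - η' / κ ^ 2) = η' - 1 + Real.sqrt (η' ^ 2 - η') → η' = η := by
  have hmem : smallerRoot κ ∈ Ico (1 : ℝ) (4 / 3) :=
    ⟨(one_lt_smallerRoot hκ).le, smallerRoot_lt_four_thirds hκ⟩
  have hsol := sqrt_one_sub_div_eq_of_quadratic (by positivity) hmem.1
    (two_mul_smallerRoot_le hκ) (smallerRoot_isRoot hκ.le)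
  exact ⟨smallerRoot κ, smallerRoot_eq_two_mul_sq_div hκ, hmem, hsol,
    fun η' hη' h' => eq_of_sqrt_one_sub_div_eq hη'.1 hmem.1 h' hsol⟩
end

section
/- Let κ > 1 and let η* ∈ [1, 4/3) be the unique solution of √(1 - η/κ²) = η - 1 + √(η² - η). Define g(η) = max{ f(η/κ²), f(η) } for η ∈ (0, 4/3), where f(t) = √(1-t) on (0,1] and f(t) = t - 1 + √(t²-t) for t ≥ 1. Then g attains its minimum on (0, 4/3) uniquely at η = η*. -/
/-- For `κ > 1` and `η* ∈ [1, 4/3)` the solution of `√(1 - η/κ²) = η - 1 + √(η² - η)`,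
the function `g(η) = max{f(η/κ²), f(η)}` attains its minimum on `(0, 4/3)` uniquely
at `η = η*`. -/
theorem stmt_7 (κ ηs : ℝ) (hκ : 1 < κ) (hmem : ηs ∈ Set.Ico (1 : ℝ) (4 / 3))
    (hsol : Real.sqrt (1 - ηs / κ ^ 2) = ηs - 1 + Real.sqrt (ηs ^ 2 - ηs)) :
    ∀ η ∈ Set.Ioo (0 : ℝ) (4 / 3), η ≠ ηs →
      max (pdhgRate (ηs / κ ^ 2)) (pdhgRate ηs) <
        max (pdhgRate (η / κ ^ 2)) (pdhgRate η) := by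
  obtain ⟨hηs1, hηs43⟩ := hmem
  have hκ2 : (1:ℝ) < κ ^ 2 := by nlinarith
  have hκ2pos : (0:ℝ) < κ ^ 2 := by linarith
  -- ηs > 1
  have hηs1' : 1 < ηs := by
    rcases lt_or_eq_of_le hηs1 with h | h
    · exact h
    · exfalso
      rw [← h] at hsol
      have h1 : (1:ℝ) ^ 2 - 1 = 0 := by ring
      rw [h1, Real.sqrt_zero] at hsol
      have hp : 0 < 1 - 1 / κ ^ 2 := by
        rw [sub_pos]; exact (div_lt_one hκ2pos).mpr hκ2
      have := Real.sqrt_pos.mpr hp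
      linarith
  have hrpos : 0 < ηs - 1 + Real.sqrt (ηs ^ 2 - ηs) := by
    have := Real.sqrt_nonneg (ηs ^ 2 - ηs); linarith
  have hlt : ηs / κ ^ 2 < 1 := by
    have h0 : 0 < Real.sqrt (1 - ηs / κ ^ 2) := hsol ▸ hrpos
    have := Real.sqrt_pos.mp h0
    linarith
  have hA : pdhgRate (ηs / κ ^ 2) = Real.sqrt (1 - ηs / κ ^ 2) := if_pos hlt.le
  have hB : pdhgRate ηs = ηs - 1 + Real.sqrt (ηs ^ 2 - ηs) := if_neg (not_le.mpr hηs1')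
  have hAB : pdhgRate (ηs / κ ^ 2) = pdhgRate ηs := by rw [hA, hB, hsol]
  rintro η ⟨hη0, hη43⟩ hne
  rw [hAB, max_self]
  rcases hne.lt_or_gt with h | h
  · -- η < ηs : the first branch strictly increases
    have h1 : η / κ ^ 2 < ηs / κ ^ 2 := by gcongr
    have h2 : η / κ ^ 2 ≤ 1 := (h1.trans hlt).le
    have hC : pdhgRate (η / κ ^ 2) = Real.sqrt (1 - η / κ ^ 2) := if_pos h2
    have key : pdhgRate ηs < pdhgRate (η / κ ^ 2) := by
      rw [hC, ← hAB, hA]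
      exact Real.sqrt_lt_sqrt (by linarith) (by linarith)
    exact lt_max_iff.mpr (Or.inl key)
  · -- η > ηs : the second branch strictly increases
    have hη1 : 1 < η := hηs1'.trans h
    have hD : pdhgRate η = η - 1 + Real.sqrt (η ^ 2 - η) := if_neg (not_le.mpr hη1)
    have hs : Real.sqrt (ηs ^ 2 - ηs) ≤ Real.sqrt (η ^ 2 - η) :=
      Real.sqrt_le_sqrt (by nlinarith)
    have key : pdhgRate ηs < pdhgRate η := by rw [hB, hD]; linarith
    exact lt_max_iff.mpr (Or.inr key)
end

section
/- Let γ*(κ) = √(1 - η*(κ)/κ²) where η*(κ) ∈ [1, 4/3) solves √(1 - η/κ²) = η - 1 + √(η² - η) for κ > 1. Then γ*(κ) → 0 as κ → 1⁺ and γ*(κ)² = 1 - 4/(3κ²) + o(1/κ²) as κ → ∞; in particular γ*(κ) → 1 as κ → ∞. -/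
open Filter Topology Asymptotics

/-! Since `√(η² - η) ≤ 2/3` on `[1, 4/3]`, the defining equation gives
`4/3 - η* ≤ 1 - γ* ≤ 1 - γ*² = η*/κ²`, so `η*(κ) → 4/3` as `κ → ∞` and
`γ*² - (1 - 4/(3κ²)) = (4/3 - η*)/κ² = o(1/κ²)`.
Near `κ = 1` the bound `η* ≥ 1` gives `γ* ≤ √(1 - 1/κ²) → 0`. -/

lemma four_thirds_sub_le_div_sq {η κ : ℝ} (h₀ : 0 ≤ η) (h₁ : η ≤ 4 / 3)
    (heq : √(1 - η / κ ^ 2) = η - 1 + √(η ^ 2 - η)) : 4 / 3 - η ≤ η / κ ^ 2 := by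
  have hroot : √(η ^ 2 - η) ≤ 2 / 3 :=
    Real.sqrt_le_iff.mpr ⟨by norm_num, by nlinarith⟩
  have hx : 1 - η / κ ^ 2 ≤ √(1 - η / κ ^ 2) :=
    Real.le_sqrt_self_iff.mpr (by linarith [div_nonneg h₀ (sq_nonneg κ)])
  linarith

lemma tendsto_atTop_four_thirds {η : ℝ → ℝ}
    (hη : ∀ κ : ℝ, 1 < κ → η κ ∈ Set.Ico (1 : ℝ) (4 / 3) ∧
      √(1 - η κ / κ ^ 2) = η κ - 1 + √(η κ ^ 2 - η κ)) :
    Tendsto η atTop (𝓝 (4 / 3)) := by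
  have hlower : Tendsto (fun κ : ℝ => 4 / 3 - 4 / 3 / κ ^ 2) atTop (𝓝 (4 / 3)) := by
    simpa using (tendsto_const_nhds (x := (4 / 3 : ℝ))).sub
      (tendsto_const_nhds.div_atTop (tendsto_pow_atTop two_ne_zero))
  refine tendsto_of_tendsto_of_tendsto_of_le_of_le' hlower tendsto_const_nhds ?_ ?_
  all_goals filter_upwards [eventually_gt_atTop 1] with κ hκ
  all_goals obtain ⟨⟨h₁, h₂⟩, heq⟩ := hη κ hκ
  · have hgap := four_thirds_sub_le_div_sq (by linarith) h₂.le heq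
    have hdiv : η κ / κ ^ 2 ≤ 4 / 3 / κ ^ 2 := by gcongr
    linarith
  · exact h₂.le

lemma tendsto_sqrt_one_sub_inv_sq_nhdsGT_one :
    Tendsto (fun κ : ℝ => √(1 - 1 / κ ^ 2)) (𝓝[>] 1) (𝓝 0) := by
  have hcont : ContinuousAt (fun κ : ℝ => √(1 - 1 / κ ^ 2)) 1 := by
    fun_prop (disch := norm_num)
  simpa using hcont.tendsto.mono_left nhdsWithin_le_nhds

/-- With `η*(κ) ∈ [1, 4/3)` the solution of `√(1 - η/κ²) = η - 1 + √(η² - η)` and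
`γ*(κ) = √(1 - η*(κ)/κ²)`: `γ*(κ) → 0` as `κ → 1⁺`,
`γ*(κ)² = 1 - 4/(3κ²) + o(1/κ²)` as `κ → ∞`, and `γ*(κ) → 1` as `κ → ∞`. -/
theorem stmt_8 (ηstar : ℝ → ℝ)
    (hη : ∀ κ : ℝ, 1 < κ →
      ηstar κ ∈ Set.Ico (1 : ℝ) (4 / 3) ∧
      Real.sqrt (1 - ηstar κ / κ ^ 2) =
        ηstar κ - 1 + Real.sqrt ((ηstar κ) ^ 2 - ηstar κ)) :
    Tendsto (fun κ => Real.sqrt (1 - ηstar κ / κ ^ 2))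
        (nhdsWithin 1 (Set.Ioi 1)) (nhds 0) ∧
    (fun κ : ℝ => (Real.sqrt (1 - ηstar κ / κ ^ 2)) ^ 2 - (1 - 4 / (3 * κ ^ 2)))
        =o[atTop] (fun κ : ℝ => 1 / κ ^ 2) ∧
    Tendsto (fun κ => Real.sqrt (1 - ηstar κ / κ ^ 2)) atTop (nhds 1) := by
  have hlim := tendsto_atTop_four_thirds hη
  refine ⟨?_, ?_, ?_⟩
  · refine tendsto_of_tendsto_of_tendsto_of_le_of_le' tendsto_const_nhds
      tendsto_sqrt_one_sub_inv_sq_nhdsGT_one (.of_forall fun _ => Real.sqrt_nonneg _) ?_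
    filter_upwards [self_mem_nhdsWithin] with κ (hκ : 1 < κ)
    have : 1 / κ ^ 2 ≤ ηstar κ / κ ^ 2 := by gcongr; exact (hη κ hκ).1.1
    exact Real.sqrt_le_sqrt (by linarith)
  · have hsmall : (fun κ : ℝ => 4 / 3 - ηstar κ) =o[atTop] fun _ => (1 : ℝ) :=
      (isLittleO_one_iff ℝ).mpr (by simpa using (tendsto_const_nhds (x := (4 / 3 : ℝ))).sub hlim)
    refine (hsmall.mul_isBigO (isBigO_refl (fun κ : ℝ => 1 / κ ^ 2) _)).congr' ?_ (by simp)
    filter_upwards [eventually_ge_atTop 2] with κ hκ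
    have : ηstar κ / κ ^ 2 ≤ 1 := by
      rw [div_le_one (by positivity)]
      nlinarith [(hη κ (by linarith)).1.2]
    rw [Real.sq_sqrt (by linarith)]
    field_simp
    ring
  · simpa using ((tendsto_const_nhds (x := (1 : ℝ))).sub
      (hlim.div_atTop (tendsto_pow_atTop two_ne_zero))).sqrt
end

section
/- Let A be invertible symmetric and G symmetric positive definite with GA = AG. Then B = Aᵀ G⁻¹ A is symmetric positive definite, B commutes with A, and if the PDHG iteration with preconditioner G is written as U_{n+1} = (I - 2τ_uτ_p AᵀG⁻¹A)U_n - τ_u AᵀG⁻½ P̂_n + c (in transformed dual variables P̂ = G½ P), its spectral radius equals max_k f(τ_uτ_p μ_k) where μ_k are the eigenvalues of AᵀG⁻¹A and f(t) = √(1-t) for 0 < t ≤ 1, f(t) = t - 1 + √(t²-t) for t ≥ 1. -/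
open Matrix

/-!
Write `B = Aᵀ G⁻¹ A` as `P Q` with `P = Aᵀ H⁻¹`, `Q = H⁻¹ A`. For the iteration matrix `M`, the lower
right block of `z - M` is the scalar `z - 1`, so the Schur complement gives
`det (z - M) = det ((z - 1)² + τ_u τ_p (2z - 1) B)`. Diagonalising `B`, the spectrum of `M` is the
union, over the eigenvalues `μ` of `B`, of the roots of `(z - 1)² + t (2z - 1)` with `t = τ_u τ_p μ`.
These roots are `1 - t ± w` with `w² = t² - t`: complex conjugates of modulus `√(1 - t)` when
`t ≤ 1`, real with larger modulus `t - 1 + √(t² - t)` when `t > 1`.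
-/

def pdhgRoots (t : ℝ) : Set ℂ := {z | (z - 1) ^ 2 + t * (2 * z - 1) = 0}

theorem pdhgRoots_eq_pair {t : ℝ} {w : ℂ} (hw : w ^ 2 = t ^ 2 - t) :
    pdhgRoots t = {1 - t + w, 1 - t - w} := by
  ext z
  have : (z - 1) ^ 2 + t * (2 * z - 1) = 0 ↔ (z - (1 - t)) ^ 2 = w ^ 2 :=
    ⟨fun h => by linear_combination h - hw, fun h => by linear_combination h + hw⟩
  simp only [pdhgRoots, Set.mem_ofPred_eq, this, sq_eq_sq_iff_eq_or_eq_neg, Set.mem_insert_iff,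
    Set.mem_singleton_iff]
  constructor <;> rintro (h | h) <;> [left; right; left; right] <;> linear_combination h

theorem isGreatest_norm_pdhgRoots {t : ℝ} (ht : 0 ≤ t) :
    IsGreatest ((‖·‖) '' pdhgRoots t) (pdhgRate t) := by
  suffices ∃ w : ℂ, w ^ 2 = t ^ 2 - t ∧ ‖1 - t + w‖ ≤ pdhgRate t ∧ ‖1 - t - w‖ = pdhgRate t by
    obtain ⟨w, hw, hle, heq⟩ := this
    rw [← heq] at hle
    rw [pdhgRoots_eq_pair hw, Set.image_pair, ← heq]
    simpa only [max_eq_right hle] using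
      (isGreatest_pair : IsGreatest {‖1 - t + w‖, ‖1 - t - w‖} _)
  by_cases h1 : t ≤ 1
  · set y := Real.sqrt (t - t ^ 2)
    have hy : (y : ℂ) ^ 2 = t - t ^ 2 := by
      exact_mod_cast Real.sq_sqrt (by nlinarith : 0 ≤ t - t ^ 2)
    have hnorm : ∀ s : ℝ, s ^ 2 = t - t ^ 2 → ‖1 - t + s * Complex.I‖ = pdhgRate t := by
      intro s hs
      rw [← Complex.ofReal_one, ← Complex.ofReal_sub, Complex.norm_add_mul_I, hs, pdhgRate,
        if_pos h1]
      ring_nf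
    refine ⟨y * Complex.I, ?_, (hnorm y ?_).le, ?_⟩
    · linear_combination (y : ℂ) ^ 2 * Complex.I_sq - hy
    · exact_mod_cast hy
    · rw [sub_eq_add_neg, ← neg_mul, ← Complex.ofReal_neg]
      exact hnorm _ (by rw [neg_sq]; exact_mod_cast hy)
  · replace h1 := not_le.mp h1
    set v := Real.sqrt (t ^ 2 - t)
    have hv : v ^ 2 = t ^ 2 - t := Real.sq_sqrt (by nlinarith)
    have hv0 : 0 ≤ v := Real.sqrt_nonneg _
    have hrate : pdhgRate t = t - 1 + v := if_neg h1.not_ge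
    refine ⟨v, by exact_mod_cast hv, ?_, ?_⟩
    · rw [hrate, ← Complex.ofReal_one, ← Complex.ofReal_sub, ← Complex.ofReal_add,
        Complex.norm_real, Real.norm_eq_abs, abs_le]
      constructor <;> nlinarith
    · rw [hrate, ← Complex.ofReal_one, ← Complex.ofReal_sub, ← Complex.ofReal_sub,
        Complex.norm_real, Real.norm_eq_abs, abs_of_nonpos (by linarith)]
      ring

section

variable {n : Type*} [Fintype n] [DecidableEq n]

theorem Matrix.det_fromBlocks_smul_one₂₂ {𝕜 : Type*} [NontriviallyNormedField 𝕜]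
    (A B C : Matrix n n 𝕜) (d : 𝕜) :
    (fromBlocks A B C (d • 1)).det = (d • A - B * C).det := by
  have hL : Continuous fun d : 𝕜 => (fromBlocks A B C (d • 1)).det := by fun_prop
  have hR : Continuous fun d : 𝕜 => (d • A - B * C).det := by fun_prop
  refine congrFun (hL.ext_on (dense_compl_singleton 0) hR fun d (hd : d ≠ 0) => ?_) d
  let _ : Invertible (d • (1 : Matrix n n 𝕜)) := ⟨d⁻¹ • 1, by simp [hd], by simp [hd]⟩
  beta_reduce
  rw [det_fromBlocks₂₂, ← det_mul]
  congr 1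
  show d • 1 * (A - B * (d⁻¹ • 1) * C) = _
  simp [mul_sub, smul_smul, hd]

theorem Matrix.IsHermitian.det_smul_one_add_smul_map {R : Type*} [CommRing R] (f : ℝ →+* R)
    {B : Matrix n n ℝ} (hB : B.IsHermitian) (a b : R) :
    (a • 1 + b • B.map f).det = ∏ i, (a + b * f (hB.eigenvalues i)) := by
  set U : Matrix n n ℝ := (hB.eigenvectorUnitary : Matrix n n ℝ)
  have hUU : U * star U = 1 := Matrix.mem_unitaryGroup_iff.mp hB.eigenvectorUnitary.2
  have hB' : B = U * diagonal hB.eigenvalues * star U := by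
    simpa [Function.comp_def] using hB.spectral_theorem
  have key : a • 1 + b • B.map f
      = U.map f * diagonal (fun i => a + b * f (hB.eigenvalues i)) * (star U).map f := by
    have hUU' : U.map f * (star U).map f = 1 := by
      rw [← Matrix.map_mul, hUU, Matrix.map_one f (map_zero f) (map_one f)]
    have hdiag : diagonal (fun i => a + b * f (hB.eigenvalues i))
        = a • 1 + b • (diagonal hB.eigenvalues).map f := by
      ext i j; rcases eq_or_ne i j with rfl | h <;> simp [*]
    conv_lhs => rw [hB', Matrix.map_mul, Matrix.map_mul]
    rw [hdiag, Matrix.mul_add, Matrix.add_mul, Matrix.mul_smul, Matrix.smul_mul, Matrix.mul_one,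
      hUU', Matrix.mul_smul, Matrix.smul_mul]
  rw [key, det_mul, det_mul, mul_right_comm, ← det_mul, ← Matrix.map_mul, hUU,
    Matrix.map_one f (map_zero f) (map_one f), det_one, one_mul, det_diagonal]

theorem spectrum_pdhg_eq_iUnion {B P Q : Matrix n n ℝ} (hB : B.IsHermitian) (hPQ : P * Q = B)
    (τu τp : ℝ) :
    spectrum ℂ ((fromBlocks (1 - (2 * τu * τp) • B) ((-τu) • P) (τp • Q) 1).map Complex.ofReal) =
      ⋃ i, pdhgRoots (τu * τp * hB.eigenvalues i) := by
  ext z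
  have hblocks : algebraMap ℂ _ z
      - (fromBlocks (1 - (2 * τu * τp) • B) ((-τu) • P) (τp • Q) 1).map Complex.ofReal
      = fromBlocks ((z - 1) • 1 + ((2 * τu * τp : ℝ) : ℂ) • B.map Complex.ofRealHom)
          ((τu : ℂ) • P.map Complex.ofRealHom) ((-τp : ℂ) • Q.map Complex.ofRealHom)
          ((z - 1) • 1) := by
    ext (i | i) (j | j) <;> rcases eq_or_ne i j with rfl | h <;>
      simp [Algebra.algebraMap_eq_smul_one, sub_add, *]
  have hschur : (z - 1) • ((z - 1) • 1 + ((2 * τu * τp : ℝ) : ℂ) • B.map Complex.ofRealHom)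
      - ((τu : ℂ) • P.map Complex.ofRealHom) * ((-τp : ℂ) • Q.map Complex.ofRealHom)
      = (z - 1) ^ 2 • 1 + ((τu * τp : ℝ) * (2 * z - 1) : ℂ) • B.map Complex.ofRealHom := by
    rw [Matrix.smul_mul, Matrix.mul_smul, ← Matrix.map_mul, hPQ, smul_add, smul_smul, smul_smul,
      smul_smul, sub_eq_add_neg, ← neg_smul, add_assoc, ← add_smul, sq]
    congr 2
    push_cast
    ring
  rw [spectrum.mem_iff, Matrix.isUnit_iff_isUnit_det, isUnit_iff_ne_zero, not_not, hblocks,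
    det_fromBlocks_smul_one₂₂, hschur, hB.det_smul_one_add_smul_map,
    Finset.prod_eq_zero_iff]
  simp only [Finset.mem_univ, true_and, Set.mem_iUnion, pdhgRoots, Set.mem_ofPred_eq]
  refine exists_congr fun i => Eq.congr_left ?_
  simp only [Complex.ofRealHom_eq_coe]
  push_cast
  ring

end

theorem isGreatest_iUnion {ι α : Type*} [Preorder α] {T : ι → Set α} {a : ι → α} {r : α}
    (hT : ∀ i, IsGreatest (T i) (a i)) (hr : IsGreatest (Set.range a) r) :
    IsGreatest (⋃ i, T i) r := by
  obtain ⟨⟨i, rfl⟩, hmax⟩ := hr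
  refine ⟨Set.mem_iUnion.mpr ⟨i, (hT i).1⟩, fun x hx => ?_⟩
  obtain ⟨j, hj⟩ := Set.mem_iUnion.mp hx
  exact ((hT j).2 hj).trans (hmax ⟨j, rfl⟩)

theorem stmt_12_general {N : ℕ} (hN : 0 < N) (A G H : Matrix (Fin N) (Fin N) ℝ)
    (hA : A.IsSymm) (hAdet : IsUnit A.det) (hG : G.PosDef) (hcomm : G * A = A * G)
    (hHG : H * H = G) (τu τp : ℝ) (hu : 0 < τu) (hp : 0 < τp) :
    (Aᵀ * G⁻¹ * A).PosDef ∧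
    (Aᵀ * G⁻¹ * A) * A = A * (Aᵀ * G⁻¹ * A) ∧
    ∃ r : ℝ,
      IsGreatest
        ((fun z : ℂ => ‖z‖) ''
          spectrum ℂ
            ((Matrix.fromBlocks (1 - (2 * τu * τp) • (Aᵀ * G⁻¹ * A))
                ((-τu) • (Aᵀ * H⁻¹)) (τp • (H⁻¹ * A)) 1).map Complex.ofReal)) r ∧
      IsGreatest ((fun μ => pdhgRate (τu * τp * μ)) '' spectrum ℝ (Aᵀ * G⁻¹ * A)) r := by
  have hB : (Aᵀ * G⁻¹ * A).PosDef := by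
    simpa using hG.inv.conjTranspose_mul_mul_same
      (mulVec_injective_iff_isUnit.mpr ((isUnit_iff_isUnit_det A).mpr hAdet))
  have hGA : Commute G⁻¹ A := by
    have hGu : IsUnit G := (isUnit_iff_isUnit_det G).mpr hG.det_pos.ne'.isUnit
    simpa using Commute.units_inv_left (u := hGu.unit) hcomm
  have hPQ : Aᵀ * H⁻¹ * (H⁻¹ * A) = Aᵀ * G⁻¹ * A := by
    rw [← hHG, Matrix.mul_inv_rev]; simp only [Matrix.mul_assoc]
  have : Nonempty (Fin N) := ⟨⟨0, hN⟩⟩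
  set μ := hB.1.eigenvalues
  obtain ⟨r, hr⟩ : ∃ r, IsGreatest (Set.range fun i => pdhgRate (τu * τp * μ i)) r := by
    obtain ⟨i₀, hi₀⟩ := Finite.exists_max fun i => pdhgRate (τu * τp * μ i)
    exact ⟨_, ⟨i₀, rfl⟩, by rintro _ ⟨i, rfl⟩; exact hi₀ i⟩
  refine ⟨hB, ?_, r, ?_, ?_⟩
  · rw [hA.eq]
    exact ((Commute.refl A).mul_left hGA).mul_left (Commute.refl A) |>.eq
  · rw [spectrum_pdhg_eq_iUnion hB.1 hPQ, Set.image_iUnion]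
    exact isGreatest_iUnion (fun i => isGreatest_norm_pdhgRoots
      (by have := hB.eigenvalues_pos i; positivity)) hr
  · rwa [hB.1.spectrum_real_eq_range_eigenvalues, ← Set.range_comp]

/-- For invertible symmetric `A` and symmetric positive definite `G` commuting with
`A` (with positive definite square root `H`, `H² = G`): `B = Aᵀ G⁻¹ A` is symmetric
positive definite, commutes with `A`, and the spectral radius of the transformed
G-prox PDHG iteration matrix
`M = [[I - 2τ_uτ_p B, -τ_u Aᵀ H⁻¹], [τ_p H⁻¹ A, I]]`
equals `max_k f(τ_uτ_p μ_k)` over the eigenvalues `μ_k` of `B`. -/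
theorem stmt_12 {N : ℕ} (hN : 0 < N) (A G H : Matrix (Fin N) (Fin N) ℝ)
    (hA : A.IsSymm) (hAdet : IsUnit A.det) (hG : G.PosDef) (hcomm : G * A = A * G)
    (hH : H.PosDef) (hHG : H * H = G) (τu τp : ℝ) (hu : 0 < τu) (hp : 0 < τp) :
    (Aᵀ * G⁻¹ * A).PosDef ∧
    (Aᵀ * G⁻¹ * A) * A = A * (Aᵀ * G⁻¹ * A) ∧
    ∃ r : ℝ,
      IsGreatest
        ((fun z : ℂ => ‖z‖) ''
          spectrum ℂ
            ((Matrix.fromBlocks (1 - (2 * τu * τp) • (Aᵀ * G⁻¹ * A))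
                ((-τu) • (Aᵀ * H⁻¹)) (τp • (H⁻¹ * A)) 1).map Complex.ofReal)) r ∧
      IsGreatest ((fun μ => pdhgRate (τu * τp * μ)) '' spectrum ℝ (Aᵀ * G⁻¹ * A)) r :=
  stmt_12_general hN A G H hA hAdet hG hcomm hHG τu τp hu hp
end
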